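/- arXiv:2102.12079 — 2 statements merged into one kernel-verified Lean document; each statement's English description precedes it below -/
import Mathlib

section
/- For every integer j ≥ 1, ∫_0^∞ k_j(g)²/(g+1) dg ≤ 2·log(1+j), where k_j(g) = 1 - log(g+1)/log(g+1+j). -/
/-!
Split `(0, ∞)` at `g = j` and write `L = log (1 + j)`. Since `0 ≤ k_j ≤ 1`, the integrand is
at most `1 / (g + 1)` on `(0, j]`, which contributes `log (1 + j)`. For the tail,
`k_j(g) = log (1 + j / (g + 1)) / log (g + 1 + j) ≤ j / ((g + 1) L)`, so the integrand is at
most `(j / L)² (g + 1)⁻³`, contributing `j² / (2 L² (j + 1)²)`; this is at most `L` because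
`L ≥ j / (j + 1) ≥ 1 / 2`.
-/

open MeasureTheory Real Set Filter Topology

/-- The sequence `k_j(g) = 1 - log(g+1)/log(g+1+j)`. -/
noncomputable def kfun (j : ℕ) (g : ℝ) : ℝ :=
  1 - Real.log (g + 1) / Real.log (g + 1 + (j : ℝ))

theorem integral_Ioi_add_rpow_of_lt {a c m : ℝ} (ha : a < -1) (hc : -m < c) :
    ∫ x in Ioi c, (x + m) ^ a = -(c + m) ^ (a + 1) / (a + 1) := by
  have hd : ∀ x ∈ Ici c,
      HasDerivAt (fun t ↦ (t + m) ^ (a + 1) / (a + 1)) ((x + m) ^ a) x := by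
    intro x hx
    convert! (((hasDerivAt_id _).add_const _).rpow_const _).div_const _ using 1
    · simp [show a + 1 ≠ 0 by linarith]
    left; linarith [mem_Ici.mp hx, id_eq x]
  have ht : Tendsto (fun t ↦ ((t + m) ^ (a + 1)) / (a + 1)) atTop (𝓝 (0 / (a + 1))) := by
    rw [← neg_neg (a + 1)]
    exact (tendsto_rpow_neg_atTop (by linarith)).comp
      (tendsto_atTop_add_const_right _ m tendsto_id) |>.div_const _
  rw [integral_Ioi_of_hasDerivAt_of_tendsto' hd (integrableOn_add_rpow_Ioi_of_lt ha hc) ht]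
  ring

theorem integrableOn_Ioc_zero_inv_add_one (c : ℝ) :
    IntegrableOn (fun x : ℝ ↦ (x + 1)⁻¹) (Ioc 0 c) :=
  (ContinuousOn.integrableOn_Icc (ContinuousOn.inv₀ (by fun_prop)
    fun x hx ↦ by linarith [hx.1])).mono_set Ioc_subset_Icc_self

theorem integral_Ioc_zero_inv_add_one {c : ℝ} (hc : 0 ≤ c) :
    ∫ x in Ioc 0 c, (x + 1)⁻¹ = log (c + 1) := by
  rw [← intervalIntegral.integral_of_le hc,
    intervalIntegral.integral_comp_add_right (fun x ↦ x⁻¹) 1, zero_add,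
    integral_inv_of_pos one_pos (by linarith), div_one]

theorem MeasureTheory.IntegrableOn.of_nonneg_of_le {α : Type*} [MeasurableSpace α]
    {μ : Measure α} {f g : α → ℝ} {s : Set α} (hs : MeasurableSet s)
    (hf : AEStronglyMeasurable f (μ.restrict s)) (hg : IntegrableOn g s μ)
    (hf0 : ∀ x ∈ s, 0 ≤ f x) (hfg : ∀ x ∈ s, f x ≤ g x) :
    IntegrableOn f s μ :=
  hg.mono' hf <| (ae_restrict_mem hs).mono fun x hx ↦ by
    rw [Real.norm_eq_abs, abs_of_nonneg (hf0 x hx)]; exact hfg x hx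

theorem setIntegral_Ioi_le_add_of_le {μ : Measure ℝ} {f g₁ g₂ : ℝ → ℝ} {a b : ℝ}
    (hab : a ≤ b) (hf : AEStronglyMeasurable f (μ.restrict (Ioi a)))
    (hf0 : ∀ x ∈ Ioi a, 0 ≤ f x) (hg₁ : IntegrableOn g₁ (Ioc a b) μ)
    (hg₂ : IntegrableOn g₂ (Ioi b) μ) (hfg₁ : ∀ x ∈ Ioc a b, f x ≤ g₁ x)
    (hfg₂ : ∀ x ∈ Ioi b, f x ≤ g₂ x) :
    ∫ x in Ioi a, f x ∂μ ≤ (∫ x in Ioc a b, g₁ x ∂μ) + ∫ x in Ioi b, g₂ x ∂μ := by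
  have hf₁ := hg₁.of_nonneg_of_le measurableSet_Ioc (hf.mono_set Ioc_subset_Ioi_self)
    (fun x hx ↦ hf0 x hx.1) hfg₁
  have hf₂ := hg₂.of_nonneg_of_le measurableSet_Ioi (hf.mono_set (Ioi_subset_Ioi hab))
    (fun x hx ↦ hf0 x (hab.trans_lt hx)) hfg₂
  rw [← Ioc_union_Ioi_eq_Ioi hab,
    setIntegral_union (Ioc_disjoint_Ioi le_rfl) measurableSet_Ioi hf₁ hf₂]
  exact add_le_add (setIntegral_mono_on hf₁ hg₁ measurableSet_Ioc hfg₁)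
    (setIntegral_mono_on hf₂ hg₂ measurableSet_Ioi hfg₂)

theorem div_log_one_add_sq_div_le_log_one_add {x : ℝ} (hx : 1 ≤ x) :
    (x / log (1 + x)) ^ 2 / (2 * (x + 1) ^ 2) ≤ log (1 + x) := by
  have hL : x ≤ log (1 + x) * (x + 1) :=
    calc x = (1 - (1 + x)⁻¹) * (x + 1) := by field_simp; ring
      _ ≤ log (1 + x) * (x + 1) := by
        gcongr
        exact one_sub_inv_le_log_of_pos (by linarith)
  have hL0 : 0 < log (1 + x) := log_pos (by linarith)
  have hcube : x ^ 3 ≤ (log (1 + x) * (x + 1)) ^ 3 := pow_le_pow_left₀ (by linarith) hL 3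
  rw [div_pow, div_div, div_le_iff₀ (by positivity)]
  nlinarith

section kfun

variable {j : ℕ} {g : ℝ}

theorem log_add_one_add_natCast_pos (hj : 0 < j) (hg : 0 ≤ g) : 0 < log (g + 1 + j) := by
  have : (1 : ℝ) ≤ j := by exact_mod_cast hj
  exact log_pos (by linarith)

theorem kfun_nonneg (hj : 0 < j) (hg : 0 ≤ g) : 0 ≤ kfun j g := by
  have hle : log (g + 1) ≤ log (g + 1 + j) := log_le_log (by linarith) (by simp)
  have := div_le_one_of_le₀ hle (log_add_one_add_natCast_pos hj hg).le
  unfold kfun; linarith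

theorem kfun_le_one (hj : 0 < j) (hg : 0 ≤ g) : kfun j g ≤ 1 := by
  have := div_nonneg (log_nonneg (x := g + 1) (by linarith))
    (log_add_one_add_natCast_pos hj hg).le
  unfold kfun; linarith

theorem kfun_le_div_mul_log (hj : 0 < j) (hg : 0 ≤ g) :
    kfun j g ≤ j / ((g + 1) * log (1 + j)) := by
  have hD := log_add_one_add_natCast_pos hj hg
  have hg1 : 0 < g + 1 := by linarith
  have hnum : log (g + 1 + j) - log (g + 1) ≤ j / (g + 1) := by
    rw [← log_div (by positivity) hg1.ne']
    have := log_le_sub_one_of_pos (show 0 < (g + 1 + j) / (g + 1) by positivity)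
    rw [add_div, div_self hg1.ne'] at this ⊢
    linarith
  have hk : kfun j g = (log (g + 1 + j) - log (g + 1)) / log (g + 1 + j) := by
    unfold kfun; field_simp
  rw [hk, ← div_div]
  exact div_le_div₀ (by positivity) hnum (log_pos (by simpa using hj))
    (log_le_log (by positivity) (by linarith))

theorem sq_kfun_div_le_inv (hj : 0 < j) (hg : 0 ≤ g) :
    kfun j g ^ 2 / (g + 1) ≤ (g + 1)⁻¹ := by
  rw [inv_eq_one_div]
  gcongr
  exact pow_le_one₀ (kfun_nonneg hj hg) (kfun_le_one hj hg)

theorem sq_kfun_div_le_rpow (hj : 0 < j) (hg : 0 ≤ g) :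
    kfun j g ^ 2 / (g + 1) ≤ (j / log (1 + j)) ^ 2 * (g + 1) ^ (-3 : ℝ) := by
  have hg1 : 0 < g + 1 := by linarith
  calc kfun j g ^ 2 / (g + 1) ≤ (j / ((g + 1) * log (1 + j))) ^ 2 / (g + 1) := by
        gcongr
        · exact kfun_nonneg hj hg
        · exact kfun_le_div_mul_log hj hg
    _ = (j / log (1 + j)) ^ 2 * (g + 1) ^ (-3 : ℝ) := by
        rw [rpow_neg hg1.le]; norm_cast; field_simp

end kfun

/-- `∫_0^∞ k_j(g)²/(g+1) dg ≤ 2 log(1+j)`. -/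
theorem integral_kfun_sq_div (j : ℕ) (hj : 1 ≤ j) :
    (∫ g in Ioi (0 : ℝ), (kfun j g) ^ 2 / (g + 1)) ≤ 2 * Real.log (1 + (j : ℝ)) := by
  have hj0 : (0 : ℝ) ≤ j := j.cast_nonneg
  have hf : Measurable fun g ↦ kfun j g ^ 2 / (g + 1) := by unfold kfun; fun_prop
  calc ∫ g in Ioi 0, kfun j g ^ 2 / (g + 1)
      ≤ (∫ g in Ioc 0 (j : ℝ), (g + 1)⁻¹) +
          ∫ g in Ioi (j : ℝ), (j / log (1 + j)) ^ 2 * (g + 1) ^ (-3 : ℝ) :=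
        setIntegral_Ioi_le_add_of_le hj0 hf.aestronglyMeasurable
          (fun g hg ↦ div_nonneg (sq_nonneg _) (by linarith [hg.out]))
          (integrableOn_Ioc_zero_inv_add_one j)
          ((integrableOn_add_rpow_Ioi_of_lt (by norm_num) (by linarith)).const_mul _)
          (fun g hg ↦ sq_kfun_div_le_inv hj hg.1.le)
          (fun g hg ↦ sq_kfun_div_le_rpow hj (hj0.trans hg.le))
    _ = log (1 + j) + (j / log (1 + j)) ^ 2 / (2 * (j + 1) ^ 2) := by
        rw [integral_Ioc_zero_inv_add_one hj0, integral_const_mul,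
          integral_Ioi_add_rpow_of_lt (by norm_num) (by linarith), add_comm (j : ℝ) 1,
          show (-3 : ℝ) + 1 = -2 by norm_num, rpow_neg (by positivity), rpow_two]
        field_simp
    _ ≤ 2 * log (1 + j) := by
        linarith [div_log_one_add_sq_div_le_log_one_add (x := j) (by exact_mod_cast hj)]
end

section
/- Let p ≥ 1 and n ≥ 1 be integers, let a, b be reals with p/2 + a + 1 > 0 and b > -1, let γ be a real with 0 ≤ γ < p/2 + a + 1, and let π(g) = (g+1)^{-(a+2)}(g/(g+1))^b. Then there exists a constant q₄ > 0, independent of i, w and s, such that for every integer i ≥ 1, every w > 0 and every s > 0: ∫_0^∞∫_0^∞ F(g,η;w,s) h_i(η)² (g+1)^γ π(g) dg dη ≤ q₄ · (w+1)^γ · ∫_0^∞∫_0^∞ F(g,η;w,s) h_i(η)² π(g) dg dη. -/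
/-!
Integrating out `η` gives `∫ F h_i² (·) dη = (g+1)^{-p/2} (·) E((s/2)(w/(g+1) + 1))`, where
`E(t) = ∫ η^m e^{-tη} h_i(η)² dη` is decreasing in `t` and `E(t/2) ≤ C E(t)` uniformly in
`i`, because `h_i(2u) ≤ (1 + log 2) h_i(u)`. Split the `g`-integral at `R = 2w + 1`. For
`g ≤ R` the weight `(g+1)^γ` is at most `(2(w+1))^γ`. For `g > R` the argument of `E` lies in
`[s/2, s]`, so both integrands are comparable, uniformly in `i, w, s`, to
`E(s) (g+1)^{-(p/2+a+2)}`; as `γ < p/2 + a + 1`, the tail of the weighted power law is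
`(R+1)^γ` times that of the plain one, up to a constant.
-/

open MeasureTheory Real Set

/-- The kernel `F(g,η;w,s)`. -/
noncomputable def Fker (p n : ℕ) (g η w s : ℝ) : ℝ :=
  η ^ ((p : ℝ) / 2 + (n : ℝ) / 2) * (g + 1) ^ (-(p : ℝ) / 2) *
    Real.exp (-(η * s / 2) * (w / (g + 1) + 1))

/-- The sequence `h_i(η) = i/(i + |log η|)`. -/
noncomputable def hfun (i : ℕ) (η : ℝ) : ℝ :=
  (i : ℝ) / ((i : ℝ) + |Real.log η|)

/-- The prior `π(g) = (g+1)^{-(a+2)} (g/(g+1))^b`. -/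
noncomputable def priorPi (a b g : ℝ) : ℝ :=
  (g + 1) ^ (-(a + 2)) * (g / (g + 1)) ^ b

lemma rpow_le_two_rpow_abs {x : ℝ} (b : ℝ) (hx₁ : 2⁻¹ ≤ x) (hx₂ : x ≤ 2) :
    x ^ b ≤ 2 ^ |b| := by
  rcases le_or_gt 0 b with hb | hb
  · rw [abs_of_nonneg hb]
    exact rpow_le_rpow (by linarith) hx₂ hb
  · rw [abs_of_neg hb, rpow_neg zero_le_two, ← inv_rpow zero_le_two]
    exact rpow_le_rpow_of_nonpos (by norm_num) hx₁ hb.le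

lemma two_rpow_neg_abs_le_rpow {x : ℝ} (b : ℝ) (hx₁ : 2⁻¹ ≤ x) (hx₂ : x ≤ 2) :
    2 ^ (-|b|) ≤ x ^ b := by
  have hx : 0 < x := by linarith
  have h := rpow_le_two_rpow_abs b (x := x⁻¹) (by rwa [inv_le_inv₀ (by norm_num) hx])
    (by rwa [inv_le_comm₀ hx two_pos])
  rw [inv_rpow hx.le, inv_le_comm₀ (by positivity) (by positivity)] at h
  rwa [rpow_neg zero_le_two]

lemma integrableOn_add_one_rpow_Ioi {e R : ℝ} (he : e < -1) (hR : -1 < R) :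
    IntegrableOn (fun g : ℝ => (g + 1) ^ e) (Ioi R) := by
  have h := (measurePreserving_add_right volume (1 : ℝ)).integrableOn_comp_preimage
    (MeasurableEquiv.addRight (1 : ℝ)).measurableEmbedding
    (f := fun x : ℝ => x ^ e) (s := Ioi (R + 1))
  rw [preimage_add_const_Ioi, add_sub_cancel_right] at h
  exact h.2 (integrableOn_Ioi_rpow_of_lt he (by linarith))

lemma integral_add_one_rpow_Ioi {e R : ℝ} (he : e < -1) (hR : -1 < R) :
    ∫ g in Ioi R, (g + 1) ^ e = -(R + 1) ^ (e + 1) / (e + 1) := by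
  have h := (measurePreserving_add_right volume (1 : ℝ)).setIntegral_preimage_emb
    (MeasurableEquiv.addRight (1 : ℝ)).measurableEmbedding (fun x : ℝ => x ^ e) (Ioi (R + 1))
  rw [preimage_add_const_Ioi, add_sub_cancel_right] at h
  rw [h, integral_Ioi_rpow_of_lt he (by linarith)]

section PowerTail

variable {φ : ℝ → ℝ} {R A K c γ : ℝ}

/-- Both sides are compared with the explicit integrals of `(g+1)^(γ-c)` and `(g+1)^(-c)`,
whose ratio is `(c - 1)/(c - γ - 1) (R+1)^γ`. -/
lemma setIntegral_Ioi_add_one_rpow_mul_le (hR : -1 < R) (hK : 0 ≤ K) (hc₁ : 1 < c)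
    (hc : γ + 1 < c)
    (hφi : IntegrableOn φ (Ioi R)) (hγi : IntegrableOn (fun g => (g + 1) ^ γ * φ g) (Ioi R))
    (hlow : ∀ g ∈ Ioi R, A * (g + 1) ^ (-c) ≤ φ g)
    (hup : ∀ g ∈ Ioi R, φ g ≤ K * A * (g + 1) ^ (-c)) :
    ∫ g in Ioi R, (g + 1) ^ γ * φ g
      ≤ K * (c - 1) / (c - γ - 1) * (R + 1) ^ γ * ∫ g in Ioi R, φ g := by
  have hR1 : 0 < R + 1 := by linarith
  have hlowR : A * ((R + 1) ^ (1 - c) / (c - 1)) ≤ ∫ g in Ioi R, φ g := by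
    have hpow : ∫ g in Ioi R, (g + 1) ^ (-c) = (R + 1) ^ (1 - c) / (c - 1) := by
      rw [integral_add_one_rpow_Ioi (by linarith) hR, neg_div, ← div_neg]
      ring_nf
    rw [← hpow, ← integral_const_mul]
    exact setIntegral_mono_on ((integrableOn_add_one_rpow_Ioi (by linarith) hR).const_mul _)
      hφi measurableSet_Ioi hlow
  calc ∫ g in Ioi R, (g + 1) ^ γ * φ g ≤ ∫ g in Ioi R, K * A * (g + 1) ^ (γ - c) := by
        refine setIntegral_mono_on hγi ((integrableOn_add_one_rpow_Ioi (by linarith) hR).const_mul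
          _) measurableSet_Ioi fun g hg => ?_
        have hg1 : 0 < g + 1 := by linarith [mem_Ioi.1 hg]
        calc (g + 1) ^ γ * φ g ≤ (g + 1) ^ γ * (K * A * (g + 1) ^ (-c)) := by
              gcongr; exact hup g hg
          _ = K * A * (g + 1) ^ (γ - c) := by rw [sub_eq_add_neg, rpow_add hg1]; ring
    _ = K * (c - 1) / (c - γ - 1) * (R + 1) ^ γ * (A * ((R + 1) ^ (1 - c) / (c - 1))) := by
        rw [integral_const_mul, integral_add_one_rpow_Ioi (by linarith) hR,
          show γ - c + 1 = γ + (1 - c) by ring, rpow_add hR1,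
          show γ + (1 - c) = -(c - γ - 1) by ring, div_neg, neg_div, neg_neg]
        field_simp [show c - 1 ≠ 0 by linarith]
    _ ≤ K * (c - 1) / (c - γ - 1) * (R + 1) ^ γ * ∫ g in Ioi R, φ g := by
        gcongr
        exact mul_nonneg (div_nonneg (mul_nonneg hK (by linarith)) (by linarith)) (by positivity)

lemma setIntegral_add_one_rpow_mul_le (hR : 0 ≤ R) (hK : 0 ≤ K) (hγ : 0 ≤ γ)
    (hc : γ + 1 < c)
    (hφ : ∀ g ∈ Ioi (0 : ℝ), 0 ≤ φ g) (hφi : IntegrableOn φ (Ioi 0))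
    (hγi : IntegrableOn (fun g => (g + 1) ^ γ * φ g) (Ioi 0))
    (hlow : ∀ g ∈ Ioi R, A * (g + 1) ^ (-c) ≤ φ g)
    (hup : ∀ g ∈ Ioi R, φ g ≤ K * A * (g + 1) ^ (-c)) :
    ∫ g in Ioi 0, (g + 1) ^ γ * φ g
      ≤ (1 + K * (c - 1) / (c - γ - 1)) * (R + 1) ^ γ * ∫ g in Ioi 0, φ g := by
  have hsub : Ioi R ⊆ Ioi 0 := Ioi_subset_Ioi hR
  have hφ_mono {s : Set ℝ} (hs : s ⊆ Ioi 0) : ∫ g in s, φ g ≤ ∫ g in Ioi 0, φ g :=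
    setIntegral_mono_set hφi ((ae_restrict_iff' measurableSet_Ioi).2 (.of_forall hφ))
      hs.eventuallyLE
  have hbody : ∫ g in Ioc 0 R, (g + 1) ^ γ * φ g ≤ (R + 1) ^ γ * ∫ g in Ioi 0, φ g := by
    calc ∫ g in Ioc 0 R, (g + 1) ^ γ * φ g ≤ ∫ g in Ioc 0 R, (R + 1) ^ γ * φ g := by
          refine setIntegral_mono_on (hγi.mono_set Ioc_subset_Ioi_self)
            ((hφi.mono_set Ioc_subset_Ioi_self).const_mul _) measurableSet_Ioc fun g hg => ?_
          exact mul_le_mul_of_nonneg_right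
            (rpow_le_rpow (by linarith [hg.1]) (by linarith [hg.2]) hγ) (hφ g hg.1)
      _ ≤ (R + 1) ^ γ * ∫ g in Ioi 0, φ g := by
          rw [integral_const_mul]
          exact mul_le_mul_of_nonneg_left (hφ_mono Ioc_subset_Ioi_self) (by positivity)
  have htail := setIntegral_Ioi_add_one_rpow_mul_le (by linarith) hK (by linarith) hc
    (hφi.mono_set hsub) (hγi.mono_set hsub) hlow hup
  have hKc : 0 ≤ K * (c - 1) / (c - γ - 1) * (R + 1) ^ γ :=
    mul_nonneg (div_nonneg (mul_nonneg hK (by linarith)) (by linarith)) (by positivity)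
  have hsplit := setIntegral_union (Ioc_disjoint_Ioi le_rfl) measurableSet_Ioi
    (hγi.mono_set Ioc_subset_Ioi_self) (hγi.mono_set hsub)
  rw [Ioc_union_Ioi_eq_Ioi hR] at hsplit
  rw [hsplit]
  nlinarith [mul_le_mul_of_nonneg_left (hφ_mono hsub) hKc]

end PowerTail

section hfun

variable (i : ℕ) (η : ℝ)

lemma hfun_nonneg : 0 ≤ hfun i η := by
  unfold hfun
  positivity

lemma hfun_sq_le_one : hfun i η ^ 2 ≤ 1 := by
  refine pow_le_one₀ (hfun_nonneg i η) (div_le_one_of_le₀ ?_ (by positivity))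
  linarith [abs_nonneg (log η)]

lemma measurable_hfun : Measurable (hfun i) := by
  unfold hfun
  fun_prop

variable {i η}

lemma hfun_two_mul_le (hi : 1 ≤ i) (hη : η ≠ 0) :
    hfun i (2 * η) ≤ (1 + log 2) * hfun i η := by
  have hi' : (1 : ℝ) ≤ i := by exact_mod_cast hi
  have hlog2 : 0 < log 2 := log_pos one_lt_two
  have hshift : |log η| ≤ log 2 + |log (2 * η)| := by
    rw [log_mul two_ne_zero hη]
    calc |log η| = |(log 2 + log η) - log 2| := by ring_nf
      _ ≤ |log 2 + log η| + |log 2| := abs_sub _ _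
      _ = log 2 + |log 2 + log η| := by rw [abs_of_pos hlog2, add_comm]
  unfold hfun
  have key : i + |log η| ≤ (1 + log 2) * (i + |log (2 * η)|) := by
    nlinarith [abs_nonneg (log (2 * η))]
  rw [mul_div_assoc', div_le_div_iff₀ (by positivity) (by positivity)]
  nlinarith [mul_le_mul_of_nonneg_left key (by positivity : (0 : ℝ) ≤ i)]

end hfun

noncomputable def etaIntegral (m t : ℝ) (i : ℕ) : ℝ :=
  ∫ η in Ioi 0, η ^ m * exp (-(t * η)) * hfun i η ^ 2

section etaIntegral

variable {m t : ℝ} {i : ℕ}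

lemma integrableOn_etaIntegrand (hm : -1 < m) (ht : 0 < t) :
    IntegrableOn (fun η => η ^ m * exp (-(t * η)) * hfun i η ^ 2) (Ioi 0) := by
  have hbase : IntegrableOn (fun η : ℝ => η ^ m * exp (-(t * η))) (Ioi 0) := by
    simpa [rpow_one, neg_mul] using integrableOn_rpow_mul_exp_neg_mul_rpow hm one_pos ht
  refine hbase.mul_bdd (c := 1) (by have := measurable_hfun i; fun_prop)
    (.of_forall fun η => ?_)
  rw [norm_of_nonneg (sq_nonneg _)]
  exact hfun_sq_le_one i η

lemma etaIntegral_nonneg : 0 ≤ etaIntegral m t i :=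
  setIntegral_nonneg measurableSet_Ioi fun η hη => by
    have := rpow_nonneg (le_of_lt hη) m; positivity

lemma etaIntegral_anti (hm : -1 < m) {t₁ t₂ : ℝ} (ht₁ : 0 < t₁) (h : t₁ ≤ t₂) :
    etaIntegral m t₂ i ≤ etaIntegral m t₁ i := by
  refine setIntegral_mono_on (integrableOn_etaIntegrand hm (ht₁.trans_le h))
    (integrableOn_etaIntegrand hm ht₁) measurableSet_Ioi fun η hη => ?_
  have := rpow_nonneg (le_of_lt hη) m
  have : t₁ * η ≤ t₂ * η := mul_le_mul_of_nonneg_right h (le_of_lt hη)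
  gcongr

lemma etaIntegral_half_le (hm : -1 < m) (ht : 0 < t) (hi : 1 ≤ i) :
    etaIntegral m (t / 2) i ≤ 2 ^ (m + 1) * (1 + log 2) ^ 2 * etaIntegral m t i := by
  have hsub := integral_comp_mul_left_Ioi'
    (fun η => η ^ m * exp (-(t / 2 * η)) * hfun i η ^ 2) 0 two_pos
  rw [mul_zero, smul_eq_mul] at hsub
  have hpt : ∀ u ∈ Ioi (0 : ℝ), (2 * u) ^ m * exp (-(t / 2 * (2 * u))) * hfun i (2 * u) ^ 2
      ≤ 2 ^ m * (1 + log 2) ^ 2 * (u ^ m * exp (-(t * u)) * hfun i u ^ 2) := by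
    intro u hu
    have hu0 : 0 ≤ u := le_of_lt hu
    have hh : hfun i (2 * u) ^ 2 ≤ (1 + log 2) ^ 2 * hfun i u ^ 2 := by
      rw [← mul_pow]
      exact pow_le_pow_left₀ (hfun_nonneg i _) (hfun_two_mul_le hi (ne_of_gt hu)) 2
    have := rpow_nonneg hu0 m
    rw [mul_rpow zero_le_two hu0, show t / 2 * (2 * u) = t * u by ring]
    calc 2 ^ m * u ^ m * exp (-(t * u)) * hfun i (2 * u) ^ 2
        ≤ 2 ^ m * u ^ m * exp (-(t * u)) * ((1 + log 2) ^ 2 * hfun i u ^ 2) := by gcongr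
      _ = 2 ^ m * (1 + log 2) ^ 2 * (u ^ m * exp (-(t * u)) * hfun i u ^ 2) := by ring
  calc etaIntegral m (t / 2) i
      = 2 * ∫ u in Ioi 0, (2 * u) ^ m * exp (-(t / 2 * (2 * u))) * hfun i (2 * u) ^ 2 :=
        hsub.symm
    _ ≤ 2 * ∫ u in Ioi 0,
          2 ^ m * (1 + log 2) ^ 2 * (u ^ m * exp (-(t * u)) * hfun i u ^ 2) := by
        refine mul_le_mul_of_nonneg_left (integral_mono_of_nonneg ?_
          ((integrableOn_etaIntegrand hm ht).const_mul _)
          ((ae_restrict_iff' measurableSet_Ioi).2 (.of_forall hpt))) zero_le_two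
        refine (ae_restrict_iff' measurableSet_Ioi).2 (.of_forall fun u hu => ?_)
        have := rpow_nonneg (mul_nonneg zero_le_two (le_of_lt hu)) m
        positivity
    _ = 2 ^ (m + 1) * (1 + log 2) ^ 2 * etaIntegral m t i := by
        rw [integral_const_mul, rpow_add_one two_ne_zero, etaIntegral]
        ring

lemma Measurable.etaIntegral {τ : ℝ → ℝ} (hτ : Measurable τ) :
    Measurable fun x => etaIntegral m (τ x) i := by
  have hh := measurable_hfun i
  have h : StronglyMeasurable (Function.uncurry fun x η : ℝ =>
      η ^ m * exp (-(τ x * η)) * hfun i η ^ 2) := by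
    apply Measurable.stronglyMeasurable
    unfold Function.uncurry
    fun_prop
  exact h.integral_prod_right.measurable

end etaIntegral

lemma setIntegral_Fker_mul (p n i : ℕ) (g w s C : ℝ) :
    ∫ η in Ioi 0, Fker p n g η w s * hfun i η ^ 2 * C
      = (g + 1) ^ (-(p : ℝ) / 2) * C *
        etaIntegral ((p : ℝ) / 2 + (n : ℝ) / 2) (s / 2 * (w / (g + 1) + 1)) i := by
  rw [etaIntegral, ← integral_const_mul]
  congr 1
  funext η
  rw [Fker, show -(η * s / 2) * (w / (g + 1) + 1) = -(s / 2 * (w / (g + 1) + 1) * η) by ring]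
  ring

lemma div_add_one_mem_Icc {g : ℝ} (hg : 1 ≤ g) : g / (g + 1) ∈ Icc 2⁻¹ 2 := by
  constructor
  · rw [le_div_iff₀ (by linarith)]; linarith
  · exact (div_le_one_of_le₀ (by linarith) (by linarith)).trans one_le_two

section priorPi

variable {a b δ g : ℝ}

lemma priorPi_nonneg (hg : 0 ≤ g) : 0 ≤ priorPi a b g := by
  have : 0 ≤ g / (g + 1) := by positivity
  unfold priorPi
  positivity

lemma add_one_rpow_mul_priorPi (hg : 0 ≤ g) :
    (g + 1) ^ δ * priorPi a b g = (g + 1) ^ (δ - (a + 2)) * (g / (g + 1)) ^ b := by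
  rw [priorPi, ← mul_assoc, ← rpow_add (by linarith), sub_eq_add_neg]

lemma integrableOn_add_one_rpow_mul_priorPi (hb : -1 < b) (hδ : δ < a + 1) :
    IntegrableOn (fun g => (g + 1) ^ δ * priorPi a b g) (Ioi 0) := by
  set e := δ - (a + 2)
  have he : e < -1 := by linarith
  have hmeas : Measurable fun g : ℝ => (g + 1) ^ e * (g / (g + 1)) ^ b := by fun_prop
  refine IntegrableOn.congr_fun ?_ (fun g hg => (add_one_rpow_mul_priorPi (le_of_lt hg)).symm)
    measurableSet_Ioi
  rw [← Ioc_union_Ioi_eq_Ioi zero_le_one]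
  refine IntegrableOn.union ?_ ?_
  · have hdom : IntegrableOn (fun g : ℝ => 2 ^ |b| * g ^ b) (Ioc 0 1) :=
      ((intervalIntegrable_iff_integrableOn_Ioc_of_le zero_le_one).1
        (intervalIntegral.intervalIntegrable_rpow' hb)).const_mul _
    refine hdom.mono' hmeas.aestronglyMeasurable
      ((ae_restrict_iff' measurableSet_Ioc).2 (.of_forall fun g ⟨hg0, hg1⟩ => ?_))
    have h1 : (g + 1) ^ e ≤ 1 := rpow_le_one_of_one_le_of_nonpos (by linarith) (by linarith)
    have h2 : (g + 1) ^ (-b) ≤ 2 ^ |b| := by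
      simpa only [abs_neg] using rpow_le_two_rpow_abs (-b) (x := g + 1) (by linarith) (by linarith)
    have := rpow_nonneg hg0.le b
    rw [norm_of_nonneg (by positivity), div_rpow hg0.le (by linarith), div_eq_mul_inv,
      ← rpow_neg (by linarith)]
    calc (g + 1) ^ e * (g ^ b * (g + 1) ^ (-b)) ≤ 1 * (g ^ b * 2 ^ |b|) := by gcongr
      _ = 2 ^ |b| * g ^ b := by ring
  · refine ((integrableOn_add_one_rpow_Ioi he (by norm_num)).const_mul (2 ^ |b|)).mono'
      hmeas.aestronglyMeasurable
      ((ae_restrict_iff' measurableSet_Ioi).2 (.of_forall fun g hg => ?_))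
    obtain ⟨hx₁, hx₂⟩ := div_add_one_mem_Icc (le_of_lt hg)
    have := rpow_nonneg (show 0 ≤ g + 1 by linarith [mem_Ioi.1 hg]) e
    rw [norm_of_nonneg (mul_nonneg this (rpow_nonneg (by linarith) _)), mul_comm]
    gcongr
    exact rpow_le_two_rpow_abs b hx₁ hx₂

lemma add_one_rpow_mul_priorPi_le (hg : 1 ≤ g) :
    (g + 1) ^ δ * priorPi a b g ≤ 2 ^ |b| * (g + 1) ^ (δ - (a + 2)) := by
  obtain ⟨hx₁, hx₂⟩ := div_add_one_mem_Icc hg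
  rw [add_one_rpow_mul_priorPi (by linarith), mul_comm]
  have := rpow_nonneg (show 0 ≤ g + 1 by linarith) (δ - (a + 2))
  gcongr
  exact rpow_le_two_rpow_abs b hx₁ hx₂

lemma le_add_one_rpow_mul_priorPi (hg : 1 ≤ g) :
    2 ^ (-|b|) * (g + 1) ^ (δ - (a + 2)) ≤ (g + 1) ^ δ * priorPi a b g := by
  obtain ⟨hx₁, hx₂⟩ := div_add_one_mem_Icc hg
  rw [add_one_rpow_mul_priorPi (by linarith), mul_comm]
  have := rpow_nonneg (show 0 ≤ g + 1 by linarith) (δ - (a + 2))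
  gcongr
  exact two_rpow_neg_abs_le_rpow b hx₁ hx₂

end priorPi

/-- `∫₀^∞ F(g,η;w,s) h_i(η)² π(g) dη`, see `setIntegral_Fker_mul`. -/
noncomputable def etaMarginal (p n : ℕ) (a b w s : ℝ) (i : ℕ) (g : ℝ) : ℝ :=
  (g + 1) ^ (-(p : ℝ) / 2) * priorPi a b g *
    etaIntegral ((p : ℝ) / 2 + (n : ℝ) / 2) (s / 2 * (w / (g + 1) + 1)) i

lemma neg_one_lt_half_add_half (p n : ℕ) : (-1 : ℝ) < (p : ℝ) / 2 + (n : ℝ) / 2 := by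
  have : (0 : ℝ) ≤ (p : ℝ) / 2 + (n : ℝ) / 2 := by positivity
  linarith

section etaMarginal

variable {p n i : ℕ} {a b w s g : ℝ}

lemma etaMarginal_nonneg (hg : 0 ≤ g) : 0 ≤ etaMarginal p n a b w s i g :=
  mul_nonneg (mul_nonneg (rpow_nonneg (by linarith) _) (priorPi_nonneg hg)) etaIntegral_nonneg

lemma half_le_etaIntegral_arg (hw : 0 ≤ w) (hs : 0 < s) (hg : 0 ≤ g) :
    s / 2 ≤ s / 2 * (w / (g + 1) + 1) :=
  le_mul_of_one_le_right (by linarith) (le_add_of_nonneg_left (by positivity))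

lemma integrableOn_add_one_rpow_mul_etaMarginal {γ : ℝ} (hb : -1 < b)
    (hγ : γ < (p : ℝ) / 2 + a + 1) (hw : 0 ≤ w) (hs : 0 < s) :
    IntegrableOn (fun g => (g + 1) ^ γ * etaMarginal p n a b w s i g) (Ioi 0) := by
  have hm := neg_one_lt_half_add_half p n
  have hprior :=
    integrableOn_add_one_rpow_mul_priorPi (a := a) (δ := γ + -(p : ℝ) / 2) hb (by linarith)
  have hE : Measurable fun g : ℝ =>
      etaIntegral ((p : ℝ) / 2 + (n : ℝ) / 2) (s / 2 * (w / (g + 1) + 1)) i :=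
    Measurable.etaIntegral (by fun_prop)
  refine IntegrableOn.congr_fun (hprior.mul_bdd hE.aestronglyMeasurable
    (c := etaIntegral ((p : ℝ) / 2 + (n : ℝ) / 2) (s / 2) i) ?_) (fun g hg => ?_)
    measurableSet_Ioi
  · refine (ae_restrict_iff' measurableSet_Ioi).2 (.of_forall fun g hg => ?_)
    rw [norm_of_nonneg etaIntegral_nonneg]
    exact etaIntegral_anti hm (by linarith) (half_le_etaIntegral_arg hw hs (le_of_lt hg))
  · rw [etaMarginal, rpow_add (by linarith [mem_Ioi.1 hg])]
    ring

lemma etaIntegral_arg_le (hw : 0 ≤ w) (hs : 0 < s) (hg : 2 * w + 1 < g) :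
    s / 2 * (w / (g + 1) + 1) ≤ s := by
  have : w / (g + 1) ≤ 1 := div_le_one_of_le₀ (by linarith) (by linarith)
  nlinarith

lemma le_etaMarginal (hw : 0 ≤ w) (hs : 0 < s) (hg : 2 * w + 1 < g) :
    2 ^ (-|b|) * etaIntegral ((p : ℝ) / 2 + (n : ℝ) / 2) s i *
        (g + 1) ^ (-((p : ℝ) / 2 + a + 2)) ≤ etaMarginal p n a b w s i g := by
  have hprior := le_add_one_rpow_mul_priorPi (a := a) (b := b) (δ := -(p : ℝ) / 2)
    (show 1 ≤ g by linarith)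
  have hE : etaIntegral ((p : ℝ) / 2 + (n : ℝ) / 2) s i
      ≤ etaIntegral ((p : ℝ) / 2 + (n : ℝ) / 2) (s / 2 * (w / (g + 1) + 1)) i :=
    etaIntegral_anti (neg_one_lt_half_add_half p n)
      ((half_pos hs).trans_le (half_le_etaIntegral_arg hw hs (by linarith)))
      (etaIntegral_arg_le hw hs hg)
  rw [show -(p : ℝ) / 2 - (a + 2) = -((p : ℝ) / 2 + a + 2) by ring] at hprior
  rw [etaMarginal, mul_right_comm]
  exact mul_le_mul hprior hE etaIntegral_nonneg
    (mul_nonneg (rpow_nonneg (by linarith) _) (priorPi_nonneg (by linarith)))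

lemma etaMarginal_le (hi : 1 ≤ i) (hw : 0 ≤ w) (hs : 0 < s) (hg : 2 * w + 1 < g) :
    etaMarginal p n a b w s i g ≤ (2 ^ |b|) ^ 2 * (2 ^ ((p : ℝ) / 2 + (n : ℝ) / 2 + 1) *
        (1 + log 2) ^ 2) * (2 ^ (-|b|) * etaIntegral ((p : ℝ) / 2 + (n : ℝ) / 2) s i) *
        (g + 1) ^ (-((p : ℝ) / 2 + a + 2)) := by
  have hm := neg_one_lt_half_add_half p n
  have hprior := add_one_rpow_mul_priorPi_le (a := a) (b := b) (δ := -(p : ℝ) / 2)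
    (show 1 ≤ g by linarith)
  have hE : etaIntegral ((p : ℝ) / 2 + (n : ℝ) / 2) (s / 2 * (w / (g + 1) + 1)) i
      ≤ 2 ^ ((p : ℝ) / 2 + (n : ℝ) / 2 + 1) * (1 + log 2) ^ 2 *
        etaIntegral ((p : ℝ) / 2 + (n : ℝ) / 2) s i :=
    (etaIntegral_anti hm (by positivity) (half_le_etaIntegral_arg hw hs (by linarith))).trans
      (etaIntegral_half_le hm hs hi)
  rw [show -(p : ℝ) / 2 - (a + 2) = -((p : ℝ) / 2 + a + 2) by ring] at hprior
  have hcancel : (2 : ℝ) ^ |b| * 2 ^ (-|b|) = 1 := by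
    rw [rpow_neg zero_le_two, mul_inv_cancel₀ (by positivity)]
  calc etaMarginal p n a b w s i g
      ≤ 2 ^ |b| * (g + 1) ^ (-((p : ℝ) / 2 + a + 2)) *
          (2 ^ ((p : ℝ) / 2 + (n : ℝ) / 2 + 1) * (1 + log 2) ^ 2 *
            etaIntegral ((p : ℝ) / 2 + (n : ℝ) / 2) s i) :=
        mul_le_mul hprior hE etaIntegral_nonneg
          (mul_nonneg (by positivity) (rpow_nonneg (by linarith) _))
    _ = _ := by
        linear_combination (-(2 : ℝ) ^ |b| * (g + 1) ^ (-((p : ℝ) / 2 + a + 2)) *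
          (2 ^ ((p : ℝ) / 2 + (n : ℝ) / 2 + 1) * (1 + log 2) ^ 2 *
            etaIntegral ((p : ℝ) / 2 + (n : ℝ) / 2) s i)) * hcancel

end etaMarginal

theorem ratio_bound_general (p n : ℕ)
    (a b : ℝ) (hb : -1 < b)
    (γ : ℝ) (hγ0 : 0 ≤ γ) (hγ1 : γ < (p : ℝ) / 2 + a + 1) :
    ∃ q4 : ℝ, 0 < q4 ∧
      ∀ (i : ℕ), 1 ≤ i → ∀ (w s : ℝ), 0 < w → 0 < s →
        (∫ g in Ioi (0 : ℝ), ∫ η in Ioi (0 : ℝ),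
            Fker p n g η w s * (hfun i η) ^ 2 * (g + 1) ^ γ * priorPi a b g)
          ≤ q4 * (w + 1) ^ γ *
            ∫ g in Ioi (0 : ℝ), ∫ η in Ioi (0 : ℝ),
              Fker p n g η w s * (hfun i η) ^ 2 * priorPi a b g := by
  set c := (p : ℝ) / 2 + a + 2 with hc_def
  set K := (2 ^ |b|) ^ 2 * (2 ^ ((p : ℝ) / 2 + (n : ℝ) / 2 + 1) * (1 + log 2) ^ 2)
  have hc : γ + 1 < c := by linarith
  have hK : 0 ≤ K := by positivity
  have hKc : 0 ≤ K * (c - 1) / (c - γ - 1) :=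
    div_nonneg (mul_nonneg hK (by linarith)) (by linarith)
  refine ⟨(1 + K * (c - 1) / (c - γ - 1)) * 2 ^ γ, by positivity, fun i hi w s hw hs => ?_⟩
  have hL : ∀ g ∈ Ioi (0 : ℝ), ∫ η in Ioi 0,
      Fker p n g η w s * hfun i η ^ 2 * (g + 1) ^ γ * priorPi a b g
        = (g + 1) ^ γ * etaMarginal p n a b w s i g := fun g _ => by
    rw [integral_mul_const, setIntegral_Fker_mul, etaMarginal]
    ring
  have hR : ∀ g ∈ Ioi (0 : ℝ), ∫ η in Ioi 0,
      Fker p n g η w s * hfun i η ^ 2 * priorPi a b g = etaMarginal p n a b w s i g :=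
    fun g _ => setIntegral_Fker_mul p n i g w s _
  rw [setIntegral_congr_fun measurableSet_Ioi hL, setIntegral_congr_fun measurableSet_Ioi hR]
  have hint {γ' : ℝ} (h : γ' < (p : ℝ) / 2 + a + 1) :=
    integrableOn_add_one_rpow_mul_etaMarginal (n := n) (i := i) hb h hw.le hs
  calc _ ≤ (1 + K * (c - 1) / (c - γ - 1)) * (2 * w + 1 + 1) ^ γ *
        ∫ g in Ioi 0, etaMarginal p n a b w s i g :=
      setIntegral_add_one_rpow_mul_le (by linarith) hK hγ0 hc
        (fun g hg => etaMarginal_nonneg (le_of_lt hg))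
        (by simpa using hint (γ' := 0) (by linarith)) (hint hγ1)
        (fun g hg => le_etaMarginal hw.le hs hg) (fun g hg => etaMarginal_le hi hw.le hs hg)
    _ = _ := by
      rw [show 2 * w + 1 + 1 = 2 * (w + 1) by ring, mul_rpow zero_le_two (by linarith)]
      ring

/-- Uniform ratio bound (Part 3 of Lemma B.5 of the paper). -/
theorem ratio_bound (p n : ℕ) (hp : 1 ≤ p) (hn : 1 ≤ n)
    (a b : ℝ) (hpa : (p : ℝ) / 2 + a + 1 > 0) (hb : -1 < b)
    (γ : ℝ) (hγ0 : 0 ≤ γ) (hγ1 : γ < (p : ℝ) / 2 + a + 1) :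
    ∃ q4 : ℝ, 0 < q4 ∧
      ∀ (i : ℕ), 1 ≤ i → ∀ (w s : ℝ), 0 < w → 0 < s →
        (∫ g in Ioi (0 : ℝ), ∫ η in Ioi (0 : ℝ),
            Fker p n g η w s * (hfun i η) ^ 2 * (g + 1) ^ γ * priorPi a b g)
          ≤ q4 * (w + 1) ^ γ *
            ∫ g in Ioi (0 : ℝ), ∫ η in Ioi (0 : ℝ),
              Fker p n g η w s * (hfun i η) ^ 2 * priorPi a b g :=
  ratio_bound_general p n a b hb γ hγ0 hγ1
end
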